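/- arXiv:1703.00636 — 6 statements merged into one kernel-verified Lean document; each statement's English description precedes it below -/
import Mathlib

section
/- The degree-1 graded piece of the Jacobian ring of f₀ has dimension 2: the ℂ-vector space R₁ = mk(S₁) has finrank 2, with basis the images of x₁ and x₂ (this computes the Hodge number h^{2,0} = 2). -/
open MvPolynomial

noncomputable section

/-- The polynomial ring `ℂ[x₁,x₂,x₃,x₄]`. -/
abbrev S : Type := MvPolynomial (Fin 4) ℂ

/-- The weights `(1,1,2,5)`. -/
def w : Fin 4 → ℕ := ![1, 1, 2, 5]

/-- The Fermat-type polynomial `f₀ = x₁¹⁰ + x₂¹⁰ + x₃⁵ + x₄²`. -/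
def f₀ : S := X 0 ^ 10 + X 1 ^ 10 + X 2 ^ 5 + X 3 ^ 2

/-- The Jacobian ideal of `f₀`, generated by its four partial derivatives. -/
def J : Ideal S :=
  Ideal.span {pderiv 0 f₀, pderiv 1 f₀, pderiv 2 f₀, pderiv 3 f₀}

/-- The Jacobian ring `R = S ⧸ J`. -/
abbrev R : Type := S ⧸ J

/-- The quotient map `mk : S → R` as a `ℂ`-linear map. -/
def mkL : S →ₗ[ℂ] R := (Ideal.Quotient.mkₐ ℂ J).toLinearMap

/-- `S_k`, the space of weighted homogeneous polynomials of weighted degree `k`. -/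
def Sk (k : ℕ) : Submodule ℂ S := weightedHomogeneousSubmodule ℂ w k

/-- `R_k = mk(S_k)`, the image of `S_k` in the Jacobian ring. -/
def Rk (k : ℕ) : Submodule ℂ R := (Sk k).map mkL

/-! Since all weights are positive, a monomial of weighted degree 1 is a single variable of
weight 1, so `S₁` is spanned by `x₁, x₂`. They stay independent in `R` because
`J ⊆ (x₁, x₂)² + (x₃, x₄)`: evaluation at the square-zero point `(e₁, e₂, 0, 0)` of `ℂ ⊕ ℂ²`
kills `J` and reads off the `x₁`- and `x₂`-coefficients. -/

namespace Finsupp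

variable {σ : Type*} {w : σ → ℕ}

theorem weight_eq_one_iff (hw : ∀ i, w i ≠ 0) {d : σ →₀ ℕ} :
    weight w d = 1 ↔ ∃ i, w i = 1 ∧ single i 1 = d := by
  constructor
  · intro hd
    have : NonTorsionWeight ℕ w := nonTorsionWeight_of ℕ w hw
    obtain ⟨i, hi⟩ : ∃ i, d i ≠ 0 := by
      by_contra! h
      simp [show d = 0 from Finsupp.ext h] at hd
    have hsplit := weight_sub_single_add (w := w) hi
    have hwi : w i = 1 := by have := hw i; omega
    refine ⟨i, hwi, ?_⟩
    have hrest : d - single i 1 = 0 := by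
      rw [← weight_eq_zero_iff_eq_zero w]; omega
    rw [← sub_add_single_one_cancel hi, hrest, zero_add]
  · rintro ⟨i, hi, rfl⟩
    simp [weight_single, hi]

end Finsupp

namespace MvPolynomial

variable {σ A : Type*} [CommSemiring A] {w : σ → ℕ}

theorem weightedHomogeneousSubmodule_one_eq_span (hw : ∀ i, w i ≠ 0) :
    weightedHomogeneousSubmodule A w 1 = Submodule.span A (X '' {i | w i = 1}) := by
  have hdeg :
      {d : σ →₀ ℕ | Finsupp.weight w d = 1} = (Finsupp.single · 1) '' {i | w i = 1} := by
    ext d; simp [Finsupp.weight_eq_one_iff hw]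
  rw [weightedHomogeneousSubmodule_eq_finsupp_supported, AddMonoidAlgebra.supported_eq_span_single,
    hdeg, Set.image_image]
  rfl

end MvPolynomial

namespace TrivSqZeroExt

theorem inr_pow_eq_zero {A M : Type*} [CommSemiring A] [AddCommMonoid M] [Module A M]
    [Module Aᵐᵒᵖ M] [IsCentralScalar A M] (m : M) {n : ℕ} (hn : 2 ≤ n) :
    (inr m : TrivSqZeroExt A M) ^ n = 0 := by
  ext <;> simp [zero_pow, show n ≠ 0 by omega, show n - 1 ≠ 0 by omega]

end TrivSqZeroExt

open TrivSqZeroExt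

theorem Sk_one_eq_span : Sk 1 = Submodule.span ℂ {(X 0 : S), X 1} := by
  have hw1 : {i | w i = 1} = {0, 1} := by
    ext i; fin_cases i <;> simp [w]
  rw [Sk, weightedHomogeneousSubmodule_one_eq_span (fun i => by fin_cases i <;> simp [w]), hw1,
    Set.image_pair]

def tangentPoint : Fin 4 → TrivSqZeroExt ℂ (Fin 2 → ℂ) :=
  ![inr (Pi.single 0 1), inr (Pi.single 1 1), 0, 0]

theorem J_le_ker_aeval_tangentPoint : J ≤ RingHom.ker (aeval tangentPoint) := by
  rw [J, Ideal.span_le]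
  rintro p (rfl | rfl | rfl | rfl) <;> simp [f₀, tangentPoint, inr_pow_eq_zero]

def firstOrderJet : R →ₐ[ℂ] TrivSqZeroExt ℂ (Fin 2 → ℂ) :=
  Ideal.Quotient.liftₐ J _ fun _ hp => J_le_ker_aeval_tangentPoint hp

theorem firstOrderJet_mk (p : S) :
    firstOrderJet (Ideal.Quotient.mk J p) = aeval tangentPoint p :=
  rfl

theorem linearIndependent_mk_X :
    LinearIndependent ℂ ![(Ideal.Quotient.mk J (X 0) : R), Ideal.Quotient.mk J (X 1)] := by
  refine LinearIndependent.of_comp ((sndHom ℂ _).comp firstOrderJet.toLinearMap) ?_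
  convert (Pi.basisFun ℂ (Fin 2)).linearIndependent
  ext j k; fin_cases j <;> fin_cases k <;> simp [firstOrderJet_mk, tangentPoint]

/-- The degree-1 graded piece of the Jacobian ring of `f₀` has dimension 2,
with basis the images of `x₁` and `x₂` (this computes `h^{2,0} = 2`). -/
theorem finrank_R1 :
    Module.finrank ℂ (Rk 1) = 2 ∧
      LinearIndependent ℂ
        ![(Ideal.Quotient.mk J (X 0) : R), (Ideal.Quotient.mk J (X 1) : R)] ∧
      Submodule.span ℂ
        {(Ideal.Quotient.mk J (X 0) : R), (Ideal.Quotient.mk J (X 1) : R)} = Rk 1 := by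
  have hspan : Submodule.span ℂ
      {(Ideal.Quotient.mk J (X 0) : R), (Ideal.Quotient.mk J (X 1) : R)} = Rk 1 := by
    rw [Rk, Sk_one_eq_span, Submodule.map_span, Set.image_pair]
    rfl
  refine ⟨?_, linearIndependent_mk_X, hspan⟩
  rw [← hspan, ← Matrix.range_cons_cons_empty _ _ ![],
    finrank_span_eq_card linearIndependent_mk_X, Fintype.card_fin]
end
end

section
/- The degree-11 graded piece of the Jacobian ring of f₀ has dimension 28: the ℂ-vector space R₁₁ = mk(S₁₁) has finrank 28 (this computes the Hodge number h^{1,1} = 28 for degree-10 hypersurfaces in P(1,1,2,5)). -/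
open MvPolynomial

noncomputable section

/-!
Up to unit coefficients, `J` is the monomial ideal `(x₁⁹, x₂⁹, x₃⁴, x₄)`. For a monomial ideal the
monomials lying outside it map to a basis of the quotient, and this basis is compatible with the
weighted grading, so `dim R_k` is the number of exponents `(a, b, c, 0)` with `a, b < 9`, `c < 4`
and `a + b + 2c = k`. For `k = 11` there are `28` of them.
-/

theorem Finsupp.forall_not_single_le_iff {σ : Type*} {e : σ → ℕ} {d : σ →₀ ℕ} :
    (∀ g ∈ Set.range fun i => single i (e i), ¬ g ≤ d) ↔ ∀ i, d i < e i := by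
  simp [single_le_iff]

def Finsupp.exponentsBelow {σ : Type*} [Fintype σ] [DecidableEq σ] (e w : σ → ℕ) (k : ℕ) :
    Finset (σ →₀ ℕ) :=
  ((Fintype.piFinset fun i => Finset.range (e i)).filter fun d => ∑ i, d i * w i = k).map
    Finsupp.equivFunOnFinite.symm.toEmbedding

theorem Finsupp.mem_exponentsBelow {σ : Type*} [Fintype σ] [DecidableEq σ] {e w : σ → ℕ} {k : ℕ}
    {d : σ →₀ ℕ} : d ∈ exponentsBelow e w k ↔ weight w d = k ∧ ∀ i, d i < e i := by
  simp [exponentsBelow, Finset.mem_map_equiv, weight_apply, sum_fintype, and_comm]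

namespace MvPolynomial

variable {σ K M : Type*} [AddCommMonoid M]

section CommRing

variable [CommRing K]

variable (K) in
def monomialIdeal (G : Set (σ →₀ ℕ)) : Ideal (MvPolynomial σ K) :=
  Ideal.span ((monomial · 1) '' G)

variable {G : Set (σ →₀ ℕ)}

theorem monomial_mem_monomialIdeal {d : σ →₀ ℕ} (hd : ∃ g ∈ G, g ≤ d) (c : K) :
    monomial d c ∈ monomialIdeal K G := by
  classical
  refine mem_ideal_span_monomial_image.mpr fun d' hd' => ?_
  rw [Finset.mem_singleton.mp (support_monomial_subset hd')]
  exact hd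

theorem linearIndependent_mk_monomial {s : Set (σ →₀ ℕ)} (hs : ∀ d ∈ s, ∀ g ∈ G, ¬ g ≤ d) :
    LinearIndependent K fun d : s => Ideal.Quotient.mkₐ K (monomialIdeal K G) (monomial d 1) := by
  have hmon : LinearIndependent K fun d : s => (monomial d.1 1 : MvPolynomial σ K) := by
    simpa [Function.comp_def] using
      (basisMonomials σ K).linearIndependent.comp _ Subtype.val_injective
  refine hmon.map (f := (Ideal.Quotient.mkₐ K (monomialIdeal K G)).toLinearMap) ?_
  rw [Submodule.disjoint_def]
  intro p hp hker
  have hsupp : ↑p.support ⊆ s := by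
    rw [← mem_restrictSupport_iff, restrictSupport_eq_span, Set.image_eq_range]
    exact hp
  have hmem : p ∈ monomialIdeal K G := by
    simpa [Ideal.Quotient.mkₐ_eq_mk, Ideal.Quotient.eq_zero_iff_mem] using hker
  ext d
  by_contra hd
  obtain ⟨g, hg, hgd⟩ := mem_ideal_span_monomial_image.mp hmem d (mem_support_iff.mpr hd)
  exact hs d (hsupp (mem_support_iff.mpr hd)) g hg hgd

theorem map_mk_weightedHomogeneousSubmodule (w : σ → M) (k : M) :
    (weightedHomogeneousSubmodule K w k).map
        (Ideal.Quotient.mkₐ K (monomialIdeal K G)).toLinearMap =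
      Submodule.span K ((fun d => Ideal.Quotient.mkₐ K (monomialIdeal K G) (monomial d 1)) ''
        {d | Finsupp.weight w d = k ∧ ∀ g ∈ G, ¬ g ≤ d}) := by
  rw [weightedHomogeneousSubmodule_eq_finsupp_supported, ← restrictSupport,
    restrictSupport_eq_span, Submodule.map_span, Set.image_image]
  refine le_antisymm (Submodule.span_le.mpr ?_) (Submodule.span_mono (Set.image_mono ?_))
  · rintro _ ⟨d, hd, rfl⟩
    by_cases hstd : ∀ g ∈ G, ¬ g ≤ d
    · exact Submodule.subset_span ⟨d, ⟨hd, hstd⟩, rfl⟩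
    · push Not at hstd
      change Ideal.Quotient.mk _ (monomial d 1) ∈ _
      rw [Ideal.Quotient.eq_zero_iff_mem.mpr (monomial_mem_monomialIdeal hstd 1)]
      exact zero_mem _
  · exact fun d hd => hd.1

end CommRing

section Field

variable [Field K]

theorem finrank_map_mk_weightedHomogeneousSubmodule {G : Set (σ →₀ ℕ)} (w : σ → M) (k : M)
    (T : Finset (σ →₀ ℕ))
    (hT : ∀ d, d ∈ T ↔ Finsupp.weight w d = k ∧ ∀ g ∈ G, ¬ g ≤ d) :
    Module.finrank K ((weightedHomogeneousSubmodule K w k).map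
      (Ideal.Quotient.mkₐ K (monomialIdeal K G)).toLinearMap) = T.card := by
  have hTset : {d | Finsupp.weight w d = k ∧ ∀ g ∈ G, ¬ g ≤ d} = (T : Set (σ →₀ ℕ)) := by
    ext d
    exact (hT d).symm
  rw [map_mk_weightedHomogeneousSubmodule, hTset, Set.image_eq_range,
    finrank_span_eq_card (linearIndependent_mk_monomial fun d hd => ((hT d).mp hd).2)]
  exact Fintype.card_coe T

theorem span_range_C_mul_X_pow {c : σ → K} (hc : ∀ i, c i ≠ 0) (e : σ → ℕ) :
    Ideal.span (Set.range fun i => C (c i) * X i ^ e i) =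
      monomialIdeal K (Set.range fun i => Finsupp.single i (e i)) := by
  refine le_antisymm (Ideal.span_le.mpr ?_) (Ideal.span_le.mpr ?_)
  · rintro _ ⟨i, rfl⟩
    change C (c i) * X i ^ e i ∈ monomialIdeal K _
    rw [X_pow_eq_monomial, C_mul_monomial, mul_one]
    exact monomial_mem_monomialIdeal ⟨_, Set.mem_range_self i, le_rfl⟩ _
  · rintro _ ⟨_, ⟨i, rfl⟩, rfl⟩
    change monomial (Finsupp.single i (e i)) 1 ∈ Ideal.span _
    have : monomial (Finsupp.single i (e i)) (1 : K) = C (c i)⁻¹ * (C (c i) * X i ^ e i) := by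
      rw [← mul_assoc, ← C_mul, inv_mul_cancel₀ (hc i), C_1, one_mul, X_pow_eq_monomial]
    exact this ▸ Ideal.mul_mem_left _ _ (Ideal.subset_span ⟨i, rfl⟩)

end Field

end MvPolynomial

def jacExp : Fin 4 → ℕ := ![9, 9, 4, 1]

theorem pderiv_f₀ (i : Fin 4) : pderiv i f₀ = C ((jacExp i + 1 : ℕ) : ℂ) * X i ^ jacExp i := by
  fin_cases i <;> simp [f₀, jacExp] <;> exact (map_ofNat C _).symm

theorem J_eq_monomialIdeal :
    J = monomialIdeal ℂ (Set.range fun i => Finsupp.single i (jacExp i)) := by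
  rw [← span_range_C_mul_X_pow (c := fun i => ((jacExp i + 1 : ℕ) : ℂ))
    fun _ => Nat.cast_ne_zero.mpr (Nat.succ_ne_zero _), ← funext pderiv_f₀, J]
  congr 1
  ext
  simp [Fin.exists_fin_succ, eq_comm]

theorem finrank_Rk (k : ℕ) :
    Module.finrank ℂ (Rk k) = (Finsupp.exponentsBelow jacExp w k).card := by
  have key := finrank_map_mk_weightedHomogeneousSubmodule (K := ℂ) w k
    (Finsupp.exponentsBelow jacExp w k) fun d => by
      rw [Finsupp.mem_exponentsBelow, Finsupp.forall_not_single_le_iff]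
  -- the type `R` of the goal depends on `J`, so the rewrite has to happen in `key`
  rw [← J_eq_monomialIdeal] at key
  exact key

/-- The degree-11 graded piece of the Jacobian ring of `f₀` has dimension 28
(this computes the Hodge number `h^{1,1} = 28`). -/
theorem finrank_R11 : Module.finrank ℂ (Rk 11) = 28 := by
  rw [finrank_Rk, Finsupp.exponentsBelow, Finset.card_map]
  decide
end
end

section
/- The images under mk of the following 28 monomials form a ℂ-basis of R₁₁ = mk(S₁₁): x₁ⁱx₂^{5-i}x₃³ for 0 ≤ i ≤ 5 (six monomials), x₁ⁱx₂^{7-i}x₃² for 0 ≤ i ≤ 7 (eight monomials), x₁ⁱx₂^{9-i}x₃ for 1 ≤ i ≤ 8 (eight monomials), and x₁ⁱx₂^{11-i} for 3 ≤ i ≤ 8 (six monomials). -/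
/-!
`J` is the monomial ideal `(x₁⁹, x₂⁹, x₃⁴, x₄)`. For a monomial ideal, a polynomial lies in it iff
each of its monomials does, so the images of the standard monomials (those divisible by no
generator) are linearly independent modulo it, while every other monomial maps to zero. Hence
`R₁₁` has as basis the images of the standard monomials of weighted degree 11, i.e. of
`x₁ᵃx₂ᵇx₃ᶜ` with `a, b ≤ 8`, `c ≤ 3` and `a + b + 2c = 11`, which are exactly the 28 listed ones.
-/

open MvPolynomial

noncomputable section

/-- The 28 monomials of weighted degree 11:
`x₁ⁱx₂^{5-i}x₃³` for `0 ≤ i ≤ 5`, `x₁ⁱx₂^{7-i}x₃²` for `0 ≤ i ≤ 7`,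
`x₁ⁱx₂^{9-i}x₃` for `1 ≤ i ≤ 8`, and `x₁ⁱx₂^{11-i}` for `3 ≤ i ≤ 8`. -/
def fam11 : Fin 28 → S := fun n =>
  if (n : ℕ) < 6 then X 0 ^ (n : ℕ) * X 1 ^ (5 - (n : ℕ)) * X 2 ^ 3
  else if (n : ℕ) < 14 then X 0 ^ ((n : ℕ) - 6) * X 1 ^ (7 - ((n : ℕ) - 6)) * X 2 ^ 2
  else if (n : ℕ) < 22 then X 0 ^ ((n : ℕ) - 13) * X 1 ^ (9 - ((n : ℕ) - 13)) * X 2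
  else X 0 ^ ((n : ℕ) - 19) * X 1 ^ (11 - ((n : ℕ) - 19))

namespace MvPolynomial

variable {σ K : Type*} [CommRing K]

def standardExponents (G : Set (σ →₀ ℕ)) : Set (σ →₀ ℕ) := {m | ∀ s ∈ G, ¬ s ≤ m}

variable {G : Set (σ →₀ ℕ)}

theorem eq_zero_of_mem_span_monomial_of_support_subset {p : MvPolynomial σ K}
    (hp : p ∈ Ideal.span ((monomial · (1 : K)) '' G)) (hsupp : ↑p.support ⊆ standardExponents G) :
    p = 0 := by
  rw [← support_eq_empty, Finset.eq_empty_iff_forall_notMem]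
  intro m hm
  obtain ⟨s, hs, hsm⟩ := mem_ideal_span_monomial_image.mp hp m hm
  exact hsupp hm s hs hsm

theorem monomial_mem_span_monomial_of_notMem_standardExponents {m : σ →₀ ℕ}
    (hm : m ∉ standardExponents G) (a : K) :
    monomial m a ∈ Ideal.span ((monomial · (1 : K)) '' G) := by
  simp only [standardExponents, Set.mem_ofPred_eq, not_forall, not_not] at hm
  obtain ⟨s, hs, hsm⟩ := hm
  refine mem_ideal_span_monomial_image.mpr fun m' hm' => ⟨s, hs, ?_⟩
  rwa [Finset.mem_singleton.mp (support_monomial_subset hm')]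

theorem linearIndependent_mk_monomial_s4 {I : Ideal (MvPolynomial σ K)}
    (hI : I = Ideal.span ((monomial · (1 : K)) '' G)) {ι : Type*} {d : ι → σ →₀ ℕ}
    (hd : Function.Injective d) (hstd : ∀ i, d i ∈ standardExponents G) :
    LinearIndependent K fun i => Ideal.Quotient.mk I (monomial (d i) 1) := by
  subst hI
  have hmon : LinearIndependent K fun i => (monomial (d i) 1 : MvPolynomial σ K) := by
    have := (basisMonomials σ K).linearIndependent.comp d hd
    rwa [coe_basisMonomials] at this
  have hspan : Submodule.span K (Set.range fun i => (monomial (d i) 1 : MvPolynomial σ K)) ≤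
      restrictSupport K (standardExponents G) := by
    rw [restrictSupport_eq_span]
    exact Submodule.span_mono (by rintro _ ⟨i, rfl⟩; exact ⟨d i, hstd i, rfl⟩)
  refine hmon.map (f := (Ideal.Quotient.mkₐ K _).toLinearMap) <|
    Submodule.disjoint_def.mpr fun p hp hker => ?_
  rw [LinearMap.mem_ker, AlgHom.toLinearMap_apply, Ideal.Quotient.mkₐ_eq_mk,
    Ideal.Quotient.eq_zero_iff_mem] at hker
  exact eq_zero_of_mem_span_monomial_of_support_subset hker (hspan hp)

theorem span_mk_monomial {I : Ideal (MvPolynomial σ K)}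
    (hI : I = Ideal.span ((monomial · (1 : K)) '' G)) {ι : Type*} {d : ι → σ →₀ ℕ}
    {T : Set (σ →₀ ℕ)} (hd : Set.range d = T ∩ standardExponents G) :
    Submodule.span K (Set.range fun i => Ideal.Quotient.mk I (monomial (d i) 1)) =
      (restrictSupport K T).map (Ideal.Quotient.mkₐ K I).toLinearMap := by
  subst hI
  set mkMon := fun m => Ideal.Quotient.mk (Ideal.span ((monomial · (1 : K)) '' G)) (monomial m 1)
  rw [restrictSupport_eq_span, Submodule.map_span, Set.image_image,
    show (Set.range fun i => mkMon (d i)) = mkMon '' (T ∩ standardExponents G) by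
      rw [← hd, ← Set.range_comp]; rfl]
  refine le_antisymm (Submodule.span_mono (Set.image_mono Set.inter_subset_left)) ?_
  rw [Submodule.span_le]
  rintro _ ⟨m, hmT, rfl⟩
  by_cases hm : m ∈ standardExponents G
  · exact Submodule.subset_span ⟨m, ⟨hmT, hm⟩, rfl⟩
  · have : mkMon m = 0 := Ideal.Quotient.eq_zero_iff_mem.mpr
      (monomial_mem_span_monomial_of_notMem_standardExponents hm 1)
    change mkMon m ∈ _
    exact this ▸ Submodule.zero_mem _

end MvPolynomial

open Finsupp in
def jacobianExponents : Set (Fin 4 →₀ ℕ) := {single 0 9, single 1 9, single 2 4, single 3 1}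

theorem J_eq_span_monomial : J = Ideal.span ((monomial · (1 : ℂ)) '' jacobianExponents) := by
  have h0 : pderiv 0 f₀ = C 10 * X 0 ^ 9 := by simp [f₀, pderiv_X, map_ofNat]
  have h1 : pderiv 1 f₀ = C 10 * X 1 ^ 9 := by simp [f₀, pderiv_X, map_ofNat]
  have h2 : pderiv 2 f₀ = C 5 * X 2 ^ 4 := by simp [f₀, pderiv_X, map_ofNat]
  have h3 : pderiv 3 f₀ = C 2 * X 3 := by simp [f₀, pderiv_X, map_ofNat]
  have hunit (c : ℂ) (hc : c ≠ 0) : IsUnit (C c : S) := hc.isUnit.map C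
  simp only [J, jacobianExponents, Set.image_insert_eq, Set.image_singleton, ← X_pow_eq_monomial,
    pow_one, h0, h1, h2, h3, Ideal.span_insert,
    Ideal.span_singleton_mul_left_unit (hunit _ (by norm_num : (10 : ℂ) ≠ 0)),
    Ideal.span_singleton_mul_left_unit (hunit _ (by norm_num : (5 : ℂ) ≠ 0)),
    Ideal.span_singleton_mul_left_unit (hunit _ (by norm_num : (2 : ℂ) ≠ 0))]

theorem weight_w_apply (m : Fin 4 →₀ ℕ) : Finsupp.weight w m = m 0 + m 1 + 2 * m 2 + 5 * m 3 := by
  rw [Finsupp.weight_apply, Finsupp.sum_fintype _ _ fun i => zero_smul ℕ (w i), Fin.sum_univ_four]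
  simp only [w, smul_eq_mul, Matrix.cons_val]
  ring

theorem Sk_eq_restrictSupport (k : ℕ) : Sk k = restrictSupport ℂ {m | Finsupp.weight w m = k} :=
  weightedHomogeneousSubmodule_eq_finsupp_supported ℂ w k

def fam11ExponentVec (n : Fin 28) : Fin 4 → ℕ :=
  if (n : ℕ) < 6 then ![n, 5 - n, 3, 0]
  else if (n : ℕ) < 14 then ![n - 6, 7 - (n - 6), 2, 0]
  else if (n : ℕ) < 22 then ![n - 13, 9 - (n - 13), 1, 0]
  else ![n - 19, 11 - (n - 19), 0, 0]

theorem fam11ExponentVec_injective : Function.Injective fam11ExponentVec := by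
  unfold Function.Injective
  decide

theorem fam11ExponentVec_spec : ∀ n,
    fam11ExponentVec n 0 < 9 ∧ fam11ExponentVec n 1 < 9 ∧ fam11ExponentVec n 2 < 4 ∧
      fam11ExponentVec n 3 = 0 ∧
      fam11ExponentVec n 0 + fam11ExponentVec n 1 + 2 * fam11ExponentVec n 2 = 11 := by
  decide

theorem exists_fam11ExponentVec_eq : ∀ a b : Fin 9, ∀ c : Fin 4, (a : ℕ) + b + 2 * c = 11 →
    ∃ n, fam11ExponentVec n = ![(a : ℕ), b, c, 0] := by
  decide

def fam11Exponent (n : Fin 28) : Fin 4 →₀ ℕ := Finsupp.equivFunOnFinite.symm (fam11ExponentVec n)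

theorem fam11Exponent_injective : Function.Injective fam11Exponent :=
  Finsupp.equivFunOnFinite.symm.injective.comp fam11ExponentVec_injective

theorem fam11_eq_monomial (n : Fin 28) : fam11 n = monomial (fam11Exponent n) 1 := by
  rw [monomial_eq, Finsupp.prod_fintype _ _ (by simp), Fin.prod_univ_four]
  unfold fam11 fam11Exponent fam11ExponentVec
  split_ifs <;> simp

theorem mem_standardExponents_jacobianExponents (m : Fin 4 →₀ ℕ) :
    m ∈ standardExponents jacobianExponents ↔ m 0 < 9 ∧ m 1 < 9 ∧ m 2 < 4 ∧ m 3 = 0 := by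
  simp [standardExponents, jacobianExponents, Finsupp.single_le_iff]

theorem range_fam11Exponent :
    Set.range fam11Exponent =
      {m | Finsupp.weight w m = 11} ∩ standardExponents jacobianExponents := by
  ext m
  simp only [Set.mem_range, Set.mem_inter_iff, Set.mem_ofPred_eq, weight_w_apply,
    mem_standardExponents_jacobianExponents]
  constructor
  · rintro ⟨n, rfl⟩
    have := fam11ExponentVec_spec n
    simp only [fam11Exponent, Finsupp.coe_equivFunOnFinite_symm]
    omega
  · rintro ⟨hw, h0, h1, h2, h3⟩
    obtain ⟨n, hn⟩ := exists_fam11ExponentVec_eq ⟨m 0, h0⟩ ⟨m 1, h1⟩ ⟨m 2, h2⟩ (by dsimp only; omega)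
    refine ⟨n, Finsupp.ext fun i => ?_⟩
    fin_cases i <;> simp [fam11Exponent, hn, h3]

/-- The images under `mk` of the 28 monomials of `fam11` form a `ℂ`-basis of `R₁₁`. -/
theorem basis_R11 :
    LinearIndependent ℂ (fun n : Fin 28 => (Ideal.Quotient.mk J (fam11 n) : R)) ∧
      Submodule.span ℂ
        (Set.range fun n : Fin 28 => (Ideal.Quotient.mk J (fam11 n) : R)) = Rk 11 := by
  simp only [fam11_eq_monomial]
  refine ⟨linearIndependent_mk_monomial_s4 J_eq_span_monomial fam11Exponent_injective fun n =>
    (range_fam11Exponent.subset (Set.mem_range_self n)).2, ?_⟩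
  rw [Rk, Sk_eq_restrictSupport, mkL]
  exact span_mk_monomial J_eq_span_monomial range_fam11Exponent
end
end

section
/- Poincaré duality for the Jacobian ring of f₀: for every i with 0 ≤ i ≤ 22 and every weighted homogeneous polynomial p of weighted degree i with p ∉ J, there exists a weighted homogeneous polynomial q of weighted degree 22 − i such that p·q ∉ J; that is, the multiplication pairing R_i ⊗ R_{22−i} → R₂₂ is nondegenerate. -/
open MvPolynomial

/-!
The Jacobian ideal of a Fermat-type polynomial `∑ xᵢ^(bᵢ+2)` is the monomial ideal
`(xᵢ^(bᵢ+1))`, so a polynomial lies outside it exactly when one of its monomials `x^m`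
divides the socle monomial `x^b`. Multiplying by `x^(b-m)` then produces `x^b` with the
nonzero coefficient of `x^m`, in weighted degree `wt(b) - wt(m)`. For `f₀` the socle monomial
is `x₁⁸x₂⁸x₃³`, of weight `22`.
-/

section MonomialBox

variable {σ R : Type*} [CommSemiring R] (b : σ →₀ ℕ)

theorem mem_span_X_pow_succ_iff {p : MvPolynomial σ R} :
    p ∈ Ideal.span (Set.range fun i => (X i : MvPolynomial σ R) ^ (b i + 1)) ↔
      ∀ m ∈ p.support, ¬m ≤ b := by
  have hrange : (Set.range fun i => (X i : MvPolynomial σ R) ^ (b i + 1)) =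
      (fun s => monomial s (1 : R)) '' Set.range fun i => Finsupp.single i (b i + 1) := by
    rw [← Set.range_comp]
    simp only [Function.comp_def, X_pow_eq_monomial]
  rw [hrange, mem_ideal_span_monomial_image]
  simp_rw [Set.exists_range_iff, Finsupp.single_le_iff, Order.add_one_le_iff, Finsupp.le_def,
    not_forall, not_le]

theorem exists_mul_notMem_span_X_pow_succ (w : σ → ℕ) {p : MvPolynomial σ R} {d : ℕ}
    (hp : IsWeightedHomogeneous w p d)
    (hpI : p ∉ Ideal.span (Set.range fun i => (X i : MvPolynomial σ R) ^ (b i + 1))) :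
    ∃ q : MvPolynomial σ R, IsWeightedHomogeneous w q (Finsupp.weight w b - d) ∧
      p * q ∉ Ideal.span (Set.range fun i => (X i : MvPolynomial σ R) ^ (b i + 1)) := by
  simp only [mem_span_X_pow_succ_iff, not_forall, not_not] at hpI
  obtain ⟨m, hm, hmb⟩ := hpI
  refine ⟨monomial (b - m) 1, isWeightedHomogeneous_monomial _ _ _ ?_, ?_⟩
  · have hsplit := congrArg (Finsupp.weight w) (add_tsub_cancel_of_le hmb)
    rw [map_add, hp (mem_support_iff.mp hm)] at hsplit
    omega
  · rw [mem_span_X_pow_succ_iff]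
    intro h
    refine h b ?_ le_rfl
    have hcoeff := coeff_mul_monomial m (b - m) (1 : R) p
    rw [add_tsub_cancel_of_le hmb, mul_one] at hcoeff
    rwa [mem_support_iff, hcoeff, ← mem_support_iff]

end MonomialBox

section Fermat

variable {σ : Type*} [Fintype σ] (b : σ → ℕ)

theorem pderiv_sum_X_pow {R : Type*} [CommSemiring R] (i : σ) :
    pderiv i (∑ j, X j ^ (b j + 2) : MvPolynomial σ R) =
      C ((b i + 2 : ℕ) : R) * X i ^ (b i + 1) := by
  classical
  simp [pderiv_X, Pi.single_apply, map_ofNat]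

theorem span_range_pderiv_sum_X_pow {K : Type*} [Field K] [CharZero K] :
    Ideal.span (Set.range fun i => pderiv i (∑ j, X j ^ (b j + 2) : MvPolynomial σ K)) =
      Ideal.span (Set.range fun i => (X i : MvPolynomial σ K) ^ (b i + 1)) := by
  simp only [pderiv_sum_X_pow]
  apply le_antisymm <;> rw [Ideal.span_le] <;> rintro _ ⟨i, rfl⟩
  · exact Ideal.mul_mem_left _ _ (Ideal.subset_span ⟨i, rfl⟩)
  · have hunit : (X i : MvPolynomial σ K) ^ (b i + 1) =
        C ((b i + 2 : ℕ) : K)⁻¹ * (C ((b i + 2 : ℕ) : K) * X i ^ (b i + 1)) := by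
      rw [← mul_assoc, ← C_mul, inv_mul_cancel₀ (Nat.cast_ne_zero.mpr (by omega)), C_1, one_mul]
    dsimp only
    rw [hunit]
    exact Ideal.mul_mem_left _ _ (Ideal.subset_span ⟨i, rfl⟩)

end Fermat

noncomputable def socleExp : Fin 4 →₀ ℕ :=
  Finsupp.single 0 8 + Finsupp.single 1 8 + Finsupp.single 2 3

theorem f₀_eq_sum_X_pow : f₀ = ∑ j, X j ^ (socleExp j + 2) := by
  simp [f₀, socleExp, Fin.sum_univ_four]

theorem J_eq_span_X_pow : J = Ideal.span (Set.range fun i => X i ^ (socleExp i + 1)) := by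
  rw [← span_range_pderiv_sum_X_pow, ← f₀_eq_sum_X_pow, J]
  congr 1
  ext
  simp [Fin.exists_fin_succ, eq_comm]

theorem weight_socleExp : Finsupp.weight w socleExp = 22 := by
  simp [socleExp, w, map_add, Finsupp.weight_single]

/-- Poincaré duality for the Jacobian ring of `f₀`: the multiplication pairing
`R_i ⊗ R_{22-i} → R₂₂` is nondegenerate. -/
theorem poincare_duality :
    ∀ i : ℕ, i ≤ 22 → ∀ p : S, IsWeightedHomogeneous w p i → p ∉ J →
      ∃ q : S, IsWeightedHomogeneous w q (22 - i) ∧ p * q ∉ J := by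
  intro i _ p hp hpJ
  rw [J_eq_span_X_pow] at hpJ ⊢
  simpa only [weight_socleExp] using exists_mul_notMem_span_X_pow_succ socleExp w hp hpJ
end

section
/- A tangent space with large fibers is fixed only by ±identity: let W be a ℂ-subspace of the space of linear maps ℂ² →ₗ[ℂ] ℂ²⁸ such that (i) for every nonzero v ∈ ℂ², the subspace {X v : X ∈ W} of ℂ²⁸ has finrank > 14, and (ii) the span of {X v : X ∈ W, v ∈ ℂ²} is all of ℂ²⁸. Suppose A ∈ U(2) is a unitary 2×2 complex matrix and B' is a real 28×28 matrix with B'ᵀB' = 1 and det B' = 1, with complexification B, and suppose B·(X v) = X·(A v) for all X ∈ W and v ∈ ℂ². Then either A = 1 and B' = 1, or A = −1 and B' = −1. -/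
/-!
If `A v = λ v` with `v ≠ 0`, the intertwining relation puts the fibre `{X v : X ∈ W}` inside the
`λ`-eigenspace of `B`, which therefore has dimension `> 14`. As `Bᵀ B = 1`, eigenspaces of `B` for
eigenvalues `λ, μ` with `λ μ ≠ 1` are orthogonal for the bilinear dot product, so their dimensions
add up to at most `28`. Hence any two eigenvalues of `A` multiply to `1`, which leaves a single
eigenvalue `λ = ±1`. A unitary matrix is normal, so having `λ` as its only eigenvalue makes it
`λ • 1`; then `B` acts as `λ` on every `X v`, and these span `ℂ²⁸`.
-/

open Matrix Module End

namespace Matrix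

variable {n K : Type*} [Fintype n] [Field K]

theorem finrank_add_finrank_le_of_dotProduct_eq_zero {S T : Submodule K (n → K)}
    (h : ∀ x ∈ S, ∀ y ∈ T, x ⬝ᵥ y = 0) :
    finrank K S + finrank K T ≤ Fintype.card n := by
  classical
  let e := dotProductEquiv K n
  have hT : T.map (e : (n → K) →ₗ[K] Dual K (n → K)) ≤ S.dualAnnihilator := by
    rintro _ ⟨y, hy, rfl⟩
    exact (Submodule.mem_dualAnnihilator _).2 fun x hx => by
      simpa [e, dotProduct_comm] using h x hx y hy
  have hS := Subspace.finrank_add_finrank_dualAnnihilator_eq S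
  have hTS := Submodule.finrank_mono hT
  rw [LinearEquiv.finrank_map_eq] at hTS
  rw [finrank_fintype_fun_eq_card] at hS
  omega

variable [DecidableEq n]

theorem dotProduct_mulVec_mulVec_of_transpose_mul_self {B : Matrix n n K} (hB : Bᵀ * B = 1)
    (x y : n → K) : B *ᵥ x ⬝ᵥ B *ᵥ y = x ⬝ᵥ y := by
  rw [dotProduct_mulVec, ← mulVec_transpose, mulVec_mulVec, hB, one_mulVec]

theorem dotProduct_eq_zero_of_mem_eigenspace {B : Matrix n n K} (hB : Bᵀ * B = 1) {l m : K}
    (hlm : l * m ≠ 1) {x y : n → K} (hx : x ∈ eigenspace (toLin' B) l)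
    (hy : y ∈ eigenspace (toLin' B) m) : x ⬝ᵥ y = 0 := by
  rw [mem_eigenspace_iff, toLin'_apply] at hx hy
  have h := dotProduct_mulVec_mulVec_of_transpose_mul_self hB x y
  rw [hx, hy, smul_dotProduct, dotProduct_smul, smul_smul, smul_eq_mul] at h
  have : (l * m - 1) * (x ⬝ᵥ y) = 0 := by linear_combination h
  exact (mul_eq_zero.1 this).resolve_left (sub_ne_zero.2 hlm)

theorem finrank_eigenspace_add_finrank_eigenspace_le {B : Matrix n n K} (hB : Bᵀ * B = 1)
    {l m : K} (hlm : l * m ≠ 1) :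
    finrank K (eigenspace (toLin' B) l) + finrank K (eigenspace (toLin' B) m) ≤
      Fintype.card n :=
  finrank_add_finrank_le_of_dotProduct_eq_zero fun _ hx _ hy =>
    dotProduct_eq_zero_of_mem_eigenspace hB hlm hx hy

open scoped Matrix.Norms.L2Operator in
theorem eq_smul_one_of_spectrum_subset_singleton {A : Matrix n n ℂ} (hA : Aᴴ * A = 1) {l : ℂ}
    (h : spectrum ℂ A ⊆ {l}) : A = l • 1 := by
  have : IsStarNormal A :=
    isStarNormal_of_mem_unitary (Unitary.mem_iff.2 ⟨hA, mul_eq_one_comm.1 hA⟩)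
  rw [CFC.eq_algebraMap_of_spectrum_subset_singleton A l h, Algebra.algebraMap_eq_smul_one]

end Matrix

section Intertwining

variable {K V M : Type*} [CommRing K] [AddCommGroup V] [Module K V] [AddCommGroup M] [Module K M]
  {W : Submodule K (V →ₗ[K] M)} {f : End K V} {g : End K M}

theorem Submodule.map_applyₗ_le_eigenspace (hfg : ∀ X ∈ W, ∀ v, g (X v) = X (f v)) {l : K}
    {v : V} (hv : v ∈ eigenspace f l) : W.map (LinearMap.applyₗ v) ≤ eigenspace g l := by
  rintro _ ⟨X, hX, rfl⟩
  rw [mem_eigenspace_iff] at hv ⊢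
  simp [hfg X hX, hv]

theorem Submodule.eq_smul_id_of_span_eq_top (hfg : ∀ X ∈ W, ∀ v, g (X v) = X (f v)) {l : K}
    (hf : ∀ v, f v = l • v)
    (hspan : Submodule.span K {y | ∃ X ∈ W, ∃ v, y = X v} = ⊤) : g = l • LinearMap.id := by
  suffices eigenspace g l = ⊤ from LinearMap.ext fun y => by
    simpa using mem_eigenspace_iff.1 (this ▸ Submodule.mem_top : y ∈ eigenspace g l)
  rw [eq_top_iff, ← hspan, Submodule.span_le]
  rintro _ ⟨X, hX, v, rfl⟩
  simp [hfg X hX, hf]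

end Intertwining

theorem fixed_only_by_pm_identity_general
    (W : Submodule ℂ ((Fin 2 → ℂ) →ₗ[ℂ] (Fin 28 → ℂ)))
    (h1 : ∀ v : Fin 2 → ℂ, v ≠ 0 →
      14 < Module.finrank ℂ (Submodule.map (LinearMap.applyₗ v) W))
    (h2 : Submodule.span ℂ
      {y : Fin 28 → ℂ | ∃ X ∈ W, ∃ v : Fin 2 → ℂ, y = X v} = ⊤)
    (A : Matrix (Fin 2) (Fin 2) ℂ) (hA : Aᴴ * A = 1)
    (B' : Matrix (Fin 28) (Fin 28) ℝ) (hB1 : B'ᵀ * B' = 1)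
    (hcomm : ∀ X ∈ W, ∀ v : Fin 2 → ℂ,
      (B'.map Complex.ofReal).mulVec (X v) = X (A.mulVec v)) :
    (A = 1 ∧ B' = 1) ∨ (A = -1 ∧ B' = -1) := by
  set B := B'.map Complex.ofReal
  have hB : Bᵀ * B = 1 := by
    change B'ᵀ.map Complex.ofRealHom * B'.map Complex.ofRealHom = 1
    rw [← Matrix.map_mul, hB1, Matrix.map_one _ (map_zero _) (map_one _)]
  have hfg : ∀ X ∈ W, ∀ v, toLin' B (X v) = X (toLin' A v) := by simpa using hcomm
  have hfib : ∀ l ∈ spectrum ℂ A, 14 < finrank ℂ (eigenspace (toLin' B) l) := fun l hl => by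
    rw [← spectrum_toLin', ← hasEigenvalue_iff_mem_spectrum] at hl
    obtain ⟨v, hv, hv0⟩ := hl.exists_hasEigenvector
    exact (h1 v hv0).trans_le (Submodule.finrank_mono (W.map_applyₗ_le_eigenspace hfg hv))
  have hprod : ∀ l ∈ spectrum ℂ A, ∀ m ∈ spectrum ℂ A, l * m = 1 := fun l hl m hm => by
    by_contra hlm
    have hsum := finrank_eigenspace_add_finrank_eigenspace_le hB hlm
    rw [Fintype.card_fin] at hsum
    have := hfib l hl
    have := hfib m hm
    omega
  obtain ⟨l, hl⟩ := spectrum.nonempty_of_isAlgClosed_of_finiteDimensional ℂ A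
  have hll := hprod l hl l hl
  -- `m = m (l l) = l (l m) = l`
  have hAl : A = l • 1 := eq_smul_one_of_spectrum_subset_singleton hA fun m hm =>
    Set.mem_singleton_iff.2 (by linear_combination l * hprod l hl m hm - m * hll)
  have hBl : B = l • 1 := by
    apply toLin'.injective
    rw [W.eq_smul_id_of_span_eq_top hfg (l := l) (fun v => by simp [hAl]) h2, map_smul,
      toLin'_one]
  rcases mul_self_eq_one_iff.1 hll with rfl | rfl
  · exact .inl ⟨by simpa using hAl,
      map_injective Complex.ofReal_injective (by simpa [B] using hBl)⟩
  · exact .inr ⟨by simpa using hAl,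
      map_injective Complex.ofReal_injective (by simpa [B, Matrix.map_neg] using hBl)⟩

/-- A tangent space with large fibers is fixed only by `±identity`: if `W` is a subspace of
`Hom(ℂ², ℂ²⁸)` whose fibers `{X v : X ∈ W}` have dimension `> 14` for every nonzero `v` and
whose total image spans `ℂ²⁸`, and if `A ∈ U(2)` and `B' ∈ SO(28)` satisfy
`B·(X v) = X·(A v)` for all `X ∈ W`, `v ∈ ℂ²`, then `(A, B') = ±(1, 1)`. -/
theorem fixed_only_by_pm_identity
    (W : Submodule ℂ ((Fin 2 → ℂ) →ₗ[ℂ] (Fin 28 → ℂ)))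
    (h1 : ∀ v : Fin 2 → ℂ, v ≠ 0 →
      14 < Module.finrank ℂ (Submodule.map (LinearMap.applyₗ v) W))
    (h2 : Submodule.span ℂ
      {y : Fin 28 → ℂ | ∃ X ∈ W, ∃ v : Fin 2 → ℂ, y = X v} = ⊤)
    (A : Matrix (Fin 2) (Fin 2) ℂ) (hA : Aᴴ * A = 1)
    (B' : Matrix (Fin 28) (Fin 28) ℝ) (hB1 : B'ᵀ * B' = 1) (hB2 : B'.det = 1)
    (hcomm : ∀ X ∈ W, ∀ v : Fin 2 → ℂ,
      (B'.map Complex.ofReal).mulVec (X v) = X (A.mulVec v)) :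
    (A = 1 ∧ B' = 1) ∨ (A = -1 ∧ B' = -1) :=
  fixed_only_by_pm_identity_general W h1 h2 A hA B' hB1 hcomm
end

section
/- A subspace with fibers of dimension greater than 14 is not tangent to any geodesic SU(2,14)-variation: let W be a ℂ-subspace of the space of linear maps ℂ² →ₗ[ℂ] ℂ²⁸ such that for every nonzero v ∈ ℂ² the subspace {X v : X ∈ W} of ℂ²⁸ has finrank > 14. Then there is no real 28×28 matrix J with JᵀJ = 1 and J² = −1 whose complexification J_ℂ satisfies J_ℂ·(X v) = i·(X v) for all X ∈ W and v ∈ ℂ². -/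
/-
The `i`-eigenvectors of a real matrix are carried by complex conjugation onto `-i`-eigenvectors,
so the two eigenspaces have the same complex dimension; being independent, each has dimension
at most `28 / 2 = 14`. A fibre `{X v : X ∈ W}` lies in the `i`-eigenspace of `J_ℂ`, so its
dimension cannot exceed `14`.
-/

open Matrix Module Module.End

theorem LinearEquiv.finrank_map_eqₛₗ {R M N : Type*} [Ring R] [AddCommGroup M] [AddCommGroup N]
    [Module R M] [Module R N] {σ σ' : R →+* R} [RingHomInvPair σ σ'] [RingHomInvPair σ' σ]
    (e : M ≃ₛₗ[σ] N) (p : Submodule R M) :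
    finrank R (p.map (e : M →ₛₗ[σ] N)) = finrank R p := by
  have hσ : Function.Bijective σ :=
    Function.bijective_iff_has_inverse.mpr
      ⟨σ', fun _ => RingHomInvPair.comp_apply_eq, fun _ => RingHomInvPair.comp_apply_eq₂⟩
  have hrank := lift_rank_eq_of_equiv_equiv σ (e.submoduleMap p).toAddEquiv hσ
    (e.submoduleMap p).map_smulₛₗ
  simpa [finrank] using congrArg Cardinal.toNat hrank.symm

section RealMatrix

variable {n : Type*} [Fintype n]

theorem Matrix.map_ofReal_mulVec_star (A : Matrix n n ℝ) (w : n → ℂ) :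
    A.map Complex.ofReal *ᵥ star w = star (A.map Complex.ofReal *ᵥ w) := by
  funext j
  simp [mulVec, dotProduct, Complex.conj_ofReal]

theorem Matrix.star_mem_eigenspace_map_ofReal (A : Matrix n n ℝ) {μ : ℂ} {w : n → ℂ}
    (hw : w ∈ eigenspace (A.map Complex.ofReal).mulVecLin μ) :
    star w ∈ eigenspace (A.map Complex.ofReal).mulVecLin (star μ) := by
  rw [mem_eigenspace_iff, mulVecLin_apply] at hw ⊢
  rw [map_ofReal_mulVec_star, hw, star_smul]

theorem Matrix.finrank_eigenspace_map_ofReal_le_star (A : Matrix n n ℝ) (μ : ℂ) :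
    finrank ℂ (eigenspace (A.map Complex.ofReal).mulVecLin μ) ≤
      finrank ℂ (eigenspace (A.map Complex.ofReal).mulVecLin (star μ)) := by
  rw [← (starLinearEquiv ℂ (A := n → ℂ)).finrank_map_eqₛₗ]
  apply Submodule.finrank_mono
  rintro _ ⟨w, hw, rfl⟩
  exact A.star_mem_eigenspace_map_ofReal hw

theorem Matrix.two_mul_finrank_eigenspace_map_ofReal_le (A : Matrix n n ℝ) {μ : ℂ}
    (hμ : μ.im ≠ 0) :
    2 * finrank ℂ (eigenspace (A.map Complex.ofReal).mulVecLin μ) ≤ Fintype.card n := by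
  have hne : μ ≠ star μ := fun h => hμ (Complex.conj_eq_iff_im.mp h.symm)
  have hdisj : Disjoint (eigenspace (A.map Complex.ofReal).mulVecLin μ)
      (eigenspace (A.map Complex.ofReal).mulVecLin (star μ)) :=
    disjoint_genEigenspace _ hne 1 1
  replace hdisj := Submodule.finrank_add_finrank_le_of_disjoint hdisj
  rw [Module.finrank_fintype_fun_eq_card] at hdisj
  have hle := A.finrank_eigenspace_map_ofReal_le_star μ
  omega

end RealMatrix

/-- A subspace with fibers of dimension greater than 14 is not tangent to any geodesic
`SU(2,14)`-variation: there is no orthogonal complex structure `J` on `ℝ²⁸` whose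
complexification satisfies `J_ℂ·(X v) = i·(X v)` for all `X ∈ W` and `v ∈ ℂ²`. -/
theorem not_tangent_to_geodesic
    (W : Submodule ℂ ((Fin 2 → ℂ) →ₗ[ℂ] (Fin 28 → ℂ)))
    (h1 : ∀ v : Fin 2 → ℂ, v ≠ 0 →
      14 < Module.finrank ℂ (Submodule.map (LinearMap.applyₗ v) W)) :
    ¬ ∃ J : Matrix (Fin 28) (Fin 28) ℝ, Jᵀ * J = 1 ∧ J * J = -1 ∧
      ∀ X ∈ W, ∀ v : Fin 2 → ℂ,
        (J.map Complex.ofReal).mulVec (X v) = Complex.I • (X v) := by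
  rintro ⟨J, -, -, hJ⟩
  let v : Fin 2 → ℂ := Pi.single 0 1
  have hv : v ≠ 0 := Pi.single_ne_zero_iff.mpr one_ne_zero
  have hfibre : W.map (LinearMap.applyₗ v) ≤
      eigenspace (J.map Complex.ofReal).mulVecLin Complex.I := by
    rintro _ ⟨X, hX, rfl⟩
    exact mem_eigenspace_iff.mpr (hJ X hX v)
  have hbound := J.two_mul_finrank_eigenspace_map_ofReal_le (μ := Complex.I) (by simp)
  have := (h1 v hv).trans_le (Submodule.finrank_mono hfibre)
  simp only [Fintype.card_fin] at hbound
  omega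
end
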